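/- Let c_{i,j} be the connection coefficients with D_i^n = Σ_{j=0}^n c_{i,j} B_j^n (dual Bernstein in Bernstein basis), with the convention c_{i,j} = 0 when i < 0, j < 0 or j > n. Then for 0 ≤ i ≤ n−1 and 0 ≤ j ≤ n: A(i) c_{i+1,j} = 2(i−j)(i+j−n) c_{i,j} + B(j) c_{i,j−1} + A(j) c_{i,j+1} − B(i) c_{i−1,j}, where A(u) = (u−n)(u+1) and B(u) = u(u−n−1). -/

import Mathlib

lemma prod_fact (a b : ℕ) :
    (∏ j ∈ Finset.range (b+1), ((a:ℂ) + 1 + j)) * (a.factorial : ℂ)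
      = ((a+b+1).factorial : ℂ) := by
  induction b with
  | zero =>
      rw [show a + 0 + 1 = a + 1 by omega, Nat.factorial_succ, Finset.prod_range_one,
        Nat.cast_mul, Nat.cast_add, Nat.cast_zero, Nat.cast_one]
      ring
  | succ m ih =>
      rw [Finset.prod_range_succ, mul_assoc, mul_comm ((a:ℂ)+1+((m+1:ℕ):ℂ)),
        ← mul_assoc, ih]
      have h2 : (a+(m+1)+1).factorial = (a + 1 + (m+1)) * (a+m+1).factorial := by
        rw [show a+(m+1)+1 = (a+m+1)+1 by omega, Nat.factorial_succ,
          show (a+m+1)+1 = a + 1 + (m+1) by omega]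
      rw [h2, Nat.cast_mul, Nat.cast_add, Nat.cast_add, Nat.cast_one]
      push_cast
      ring

lemma beta_nat (a b : ℕ) :
    ∫ x in (0:ℝ)..1, x ^ a * (1 - x) ^ b
      = (a.factorial * b.factorial : ℝ) / (a + b + 1).factorial := by
  have h := Complex.betaIntegral_eval_nat_add_one_right
      (u := (a : ℂ) + 1) (by simp; positivity) b
  rw [Complex.betaIntegral] at h
  have hint : (∫ x in (0:ℝ)..1, (x:ℂ) ^ ((a:ℂ)+1-1) * (1-(x:ℝ):ℂ) ^ ((b:ℂ)+1-1))
      = ((∫ x in (0:ℝ)..1, x ^ a * (1 - x) ^ b : ℝ) : ℂ) := by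
    rw [← intervalIntegral.integral_ofReal]
    apply intervalIntegral.integral_congr
    intro x _
    simp only [add_sub_cancel_right]
    rw [show (1 - (x:ℝ) : ℂ) = (((1 - x : ℝ)) : ℂ) by push_cast; ring]
    rw [Complex.cpow_natCast, Complex.cpow_natCast]
    push_cast
    ring
  rw [hint] at h
  have hprod := prod_fact a b
  have hfab : ((a+b+1).factorial : ℂ) ≠ 0 := by exact_mod_cast (a+b+1).factorial_ne_zero
  have hp : (∏ j ∈ Finset.range (b+1), ((a:ℂ) + 1 + j)) ≠ 0 := by
    intro h0; rw [h0, zero_mul] at hprod; exact hfab hprod.symm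
  have : ((∫ x in (0:ℝ)..1, x ^ a * (1 - x) ^ b : ℝ) : ℂ)
      = (((a.factorial * b.factorial : ℝ) / (a + b + 1).factorial : ℝ) : ℂ) := by
    rw [h]
    push_cast
    rw [div_eq_div_iff hp hfab, ← hprod]
    ring
  exact_mod_cast this

def wnat (n i j : ℕ) : ℕ := n.choose i * n.choose j * (i+j).factorial * (2*n-i-j).factorial

lemma wnat_symm (n i j : ℕ) : wnat n i j = wnat n j i := by
  unfold wnat
  rw [add_comm i j, show 2*n-i-j = 2*n-j-i by omega]
  ring

lemma wnat_step (n i j : ℕ) (hi : i ≤ n) (hj : j < n) :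
    (j+1) * (2*n-i-j) * wnat n i (j+1) = (n-j) * (i+j+1) * wnat n i j := by
  have h1 : n.choose (j+1) * (j+1) = n.choose j * (n-j) := Nat.choose_succ_right_eq n j
  have e1 : i + (j+1) = (i+j) + 1 := by omega
  have e2 : 2*n - i - j = (2*n - i - (j+1)) + 1 := by omega
  unfold wnat
  rw [e1, Nat.factorial_succ, e2, Nat.factorial_succ]
  calc (j+1) * ((2*n-i-(j+1)) + 1) * (n.choose i * n.choose (j+1) * ((i+j+1) * (i+j).factorial) * (2*n-i-(j+1)).factorial)
      = (n.choose (j+1) * (j+1)) * (((2*n-i-(j+1)) + 1) * (n.choose i * ((i+j+1) * (i+j).factorial) * (2*n-i-(j+1)).factorial)) := by ring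
    _ = (n.choose j * (n-j)) * (((2*n-i-(j+1)) + 1) * (n.choose i * ((i+j+1) * (i+j).factorial) * (2*n-i-(j+1)).factorial)) := by rw [h1]
    _ = (n-j) * (i+j+1) * (n.choose i * n.choose j * (i+j).factorial * (((2*n-i-(j+1)) + 1) * (2*n-i-(j+1)).factorial)) := by ring

noncomputable def gz (n : ℕ) (i j : ℤ) : ℝ :=
  if 0 ≤ i ∧ i ≤ (n:ℤ) ∧ 0 ≤ j ∧ j ≤ (n:ℤ) then
    (wnat n i.toNat j.toNat : ℝ) / ((2*n+1).factorial : ℝ) else 0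

noncomputable def sz (n : ℕ) (i j : ℤ) : ℝ :=
  if j = i + 1 then ((i:ℝ) - n) * ((i:ℝ) + 1)
  else if j = i - 1 then (i:ℝ) * ((i:ℝ) - n - 1)
  else if j = i then 2 * (i:ℝ) * ((n:ℝ) - (i:ℝ))
  else 0

lemma gz_natbox (n a b : ℕ) (ha : a ≤ n) (hb : b ≤ n) :
    gz n a b = (wnat n a b : ℝ) / ((2*n+1).factorial : ℝ) := by
  unfold gz
  rw [if_pos ⟨Int.natCast_nonneg a, by exact_mod_cast ha, Int.natCast_nonneg b, by exact_mod_cast hb⟩,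
    Int.toNat_natCast, Int.toNat_natCast]

lemma gz_symm (n : ℕ) (i j : ℤ) : gz n i j = gz n j i := by
  unfold gz
  rcases em (0 ≤ i ∧ i ≤ (n:ℤ) ∧ 0 ≤ j ∧ j ≤ (n:ℤ)) with h | h
  · rw [if_pos h, if_pos ⟨h.2.2.1, h.2.2.2, h.1, h.2.1⟩, wnat_symm]
  · rw [if_neg h, if_neg (by tauto)]

lemma bern_int (n q j : ℕ) (hq : q ≤ n) (hj : j ≤ n) :
    ∫ x in (0:ℝ)..1, (bernsteinPolynomial ℝ n q).eval x * (bernsteinPolynomial ℝ n j).eval x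
      = (wnat n q j : ℝ) / ((2*n+1).factorial : ℝ) := by
  have heq : ∀ x : ℝ, (bernsteinPolynomial ℝ n q).eval x * (bernsteinPolynomial ℝ n j).eval x
      = ((n.choose q * n.choose j : ℕ) : ℝ) * (x ^ (q+j) * (1-x) ^ (2*n-q-j)) := by
    intro x
    unfold bernsteinPolynomial
    simp only [Polynomial.eval_mul, Polynomial.eval_pow, Polynomial.eval_natCast,
      Polynomial.eval_X, Polynomial.eval_sub, Polynomial.eval_one]
    rw [show 2*n-q-j = (n-q)+(n-j) by omega, pow_add, pow_add]
    push_cast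
    ring
  rw [intervalIntegral.integral_congr (fun x _ => heq x),
    intervalIntegral.integral_const_mul, beta_nat,
    show (q+j)+(2*n-q-j)+1 = 2*n+1 by omega]
  unfold wnat
  push_cast
  ring

lemma phi_eval (n a b p q : ℕ) (han : a ≤ n) (hbn : b ≤ n)
    (hp : a + b = p + 1) (hq : 2*n = a + b + q + 1) :
    gz n a ((b:ℤ)-1) * sz n ((b:ℤ)-1) (b:ℤ) + gz n a b * sz n b b
        + gz n a ((b:ℤ)+1) * sz n ((b:ℤ)+1) (b:ℤ)
      = (-(b:ℝ)^2*((q:ℝ)+2)*((q:ℝ)+1) + 2*(b:ℝ)*((n:ℝ)-(b:ℝ))*((p:ℝ)+1)*((q:ℝ)+1)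
          - ((n:ℝ)-(b:ℝ))^2*((p:ℝ)+2)*((p:ℝ)+1))
        * ((n.choose a * n.choose b * p.factorial * q.factorial : ℕ) : ℝ)
        / ((2*n+1).factorial : ℝ) := by
  set u : ℕ := n.choose a * n.choose b * p.factorial * q.factorial with hu
  set F : ℝ := ((2*n+1).factorial : ℝ) with hF
  -- middle term
  have hmidw : wnat n a b = (p+1) * (q+1) * u := by
    unfold wnat
    rw [show a + b = p + 1 from hp, show 2*n - a - b = q + 1 by omega,
      Nat.factorial_succ, Nat.factorial_succ, hu]
    ring
  have hmid : gz n a b = ((p:ℝ)+1) * ((q:ℝ)+1) * (u:ℝ) / F := by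
    rw [gz_natbox n a b han hbn, hmidw]
    push_cast
    ring
  have hszmid : sz n b b = 2 * (b:ℝ) * ((n:ℝ) - (b:ℝ)) := by
    unfold sz
    rw [if_neg (by omega), if_neg (by omega), if_pos rfl]
    push_cast
    ring
  -- down term
  have hdown : gz n a ((b:ℤ)-1) * sz n ((b:ℤ)-1) (b:ℤ)
      = -(b:ℝ)^2*((q:ℝ)+2)*((q:ℝ)+1) * (u:ℝ) / F := by
    rcases Nat.eq_zero_or_pos b with hb0 | hbpos
    · subst hb0
      have : sz n ((0:ℕ)-1 : ℤ) ((0:ℕ):ℤ) = 0 := by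
        unfold sz
        rw [if_pos (by omega)]
        push_cast
        ring
      rw [this]
      push_cast
      ring
    · obtain ⟨b', rfl⟩ : ∃ b', b = b' + 1 := ⟨b - 1, by omega⟩
      set r : ℕ := n - b' with hr
      have hnr : n = b' + r := by omega
      have hchoose : n.choose (b'+1) * (b'+1) = n.choose b' * r := by
        rw [hr]; exact Nat.choose_succ_right_eq n b'
      have Ndown : r * (b'+1) * wnat n a b' = (b'+1)^2 * ((q+2)*(q+1)) * u := by
        unfold wnat
        rw [show a + b' = p by omega, show 2*n - a - b' = (q+1) + 1 by omega,
          Nat.factorial_succ, Nat.factorial_succ, hu]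
        calc r * (b'+1) * (n.choose a * n.choose b' * p.factorial
              * (((q+1)+1) * ((q+1) * q.factorial)))
            = (n.choose b' * r) * ((b'+1) * (n.choose a * p.factorial
              * (((q+1)+1) * ((q+1) * q.factorial)))) := by ring
          _ = (n.choose (b'+1) * (b'+1)) * ((b'+1) * (n.choose a * p.factorial
              * (((q+1)+1) * ((q+1) * q.factorial)))) := by rw [hchoose]
          _ = (b'+1)^2 * ((q+2)*(q+1)) * (n.choose a * n.choose (b'+1)
              * p.factorial * q.factorial) := by ring
      have hgz : gz n a (((b'+1:ℕ):ℤ)-1) = (wnat n a b' : ℝ) / F := by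
        rw [show (((b'+1:ℕ):ℤ)-1) = ((b' : ℕ) : ℤ) by push_cast; ring]
        exact gz_natbox n a b' han (by omega)
      have hsz : sz n (((b'+1:ℕ):ℤ)-1) ((b'+1:ℕ):ℤ) = -((r:ℝ) * ((b':ℝ)+1)) := by
        unfold sz
        rw [if_pos (by ring)]
        have : ((((b'+1:ℕ):ℤ)-1 : ℤ) : ℝ) = (b':ℝ) := by push_cast; ring
        rw [this]
        have : (n:ℝ) = (b':ℝ) + (r:ℝ) := by exact_mod_cast congrArg Nat.cast hnr
        rw [this]
        ring
      rw [hgz, hsz]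
      have NdownR : (r:ℝ) * ((b':ℝ)+1) * (wnat n a b' : ℝ)
          = ((b':ℝ)+1)^2 * (((q:ℝ)+2)*((q:ℝ)+1)) * (u:ℝ) := by
        exact_mod_cast congrArg (Nat.cast (R := ℝ)) Ndown
      have hF0 : F ≠ 0 := by
        rw [hF]; exact_mod_cast (2*n+1).factorial_ne_zero
      push_cast
      push_cast at NdownR
      field_simp [hF0]
      have NdownR' : (r:ℝ) * (wnat n a b' : ℝ) = ((b':ℝ)+1) * (((q:ℝ)+2)*((q:ℝ)+1)) * (u:ℝ) := by
        have hb1 : ((b':ℝ)+1) ≠ 0 := by positivity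
        apply mul_left_cancel₀ hb1
        linear_combination NdownR
      linear_combination (-1:ℝ) * NdownR'
  -- up term
  have hup : gz n a ((b:ℤ)+1) * sz n ((b:ℤ)+1) (b:ℤ)
      = -((n:ℝ)-(b:ℝ))^2*((p:ℝ)+2)*((p:ℝ)+1) * (u:ℝ) / F := by
    rcases eq_or_lt_of_le hbn with hbn' | hbn'
    · have hbe : (b:ℝ) = (n:ℝ) := by exact_mod_cast congrArg Nat.cast hbn'
      have hsz0 : sz n ((b:ℤ)+1) (b:ℤ) = 0 := by
        unfold sz
        rw [if_neg (by omega), if_pos (by ring)]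
        push_cast
        rw [hbe]
        ring
      rw [hsz0, hbe]
      ring
    · set s : ℕ := n - b with hs
      have hns : n = b + s := by omega
      have hchoose : n.choose (b+1) * (b+1) = n.choose b * s := by
        rw [hs]; exact Nat.choose_succ_right_eq n b
      have Nup : (b+1) * wnat n a (b+1) = s * ((p+2)*(p+1)) * u := by
        unfold wnat
        rw [show a + (b+1) = (p+1)+1 by omega, show 2*n - a - (b+1) = q by omega,
          Nat.factorial_succ, Nat.factorial_succ, hu]
        calc (b+1) * (n.choose a * n.choose (b+1) * (((p+1)+1) * ((p+1) * p.factorial)) * q.factorial)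
            = (n.choose (b+1) * (b+1)) * (n.choose a * (((p+1)+1) * ((p+1) * p.factorial)) * q.factorial) := by ring
          _ = (n.choose b * s) * (n.choose a * (((p+1)+1) * ((p+1) * p.factorial)) * q.factorial) := by rw [hchoose]
          _ = s * ((p+2)*(p+1)) * (n.choose a * n.choose b * p.factorial * q.factorial) := by ring
      have hgz : gz n a ((b:ℤ)+1) = (wnat n a (b+1) : ℝ) / F := by
        rw [show ((b:ℤ)+1) = ((b+1 : ℕ) : ℤ) by push_cast; ring]
        exact gz_natbox n a (b+1) han (by omega)
      have hsz : sz n ((b:ℤ)+1) (b:ℤ) = -(((b:ℝ)+1) * (s:ℝ)) := by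
        unfold sz
        rw [if_neg (by omega), if_pos (by ring)]
        have : (((b:ℤ)+1 : ℤ) : ℝ) = (b:ℝ) + 1 := by push_cast; ring
        rw [this]
        have : (n:ℝ) = (b:ℝ) + (s:ℝ) := by exact_mod_cast congrArg Nat.cast hns
        rw [this]
        ring
      rw [hgz, hsz]
      have NupR : ((b:ℝ)+1) * (wnat n a (b+1) : ℝ)
          = (s:ℝ) * (((p:ℝ)+2)*((p:ℝ)+1)) * (u:ℝ) := by
        exact_mod_cast congrArg (Nat.cast (R := ℝ)) Nup
      have hnsR : (n:ℝ) = (b:ℝ) + (s:ℝ) := by exact_mod_cast congrArg Nat.cast hns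
      have hF0 : F ≠ 0 := by
        rw [hF]; exact_mod_cast (2*n+1).factorial_ne_zero
      rw [hnsR]
      push_cast
      push_cast at NupR
      field_simp [hF0]
      linear_combination (-(s:ℝ)) * NupR
  rw [hdown, hmid, hszmid, hup]
  field_simp
  ring

lemma key (n : ℕ) (i j : ℤ) (hi0 : 0 ≤ i) (hin : i ≤ (n:ℤ)) (hj0 : 0 ≤ j) (hjn : j ≤ (n:ℤ)) :
    gz n i (j-1) * sz n (j-1) j + gz n i j * sz n j j + gz n i (j+1) * sz n (j+1) j
  = gz n j (i-1) * sz n (i-1) i + gz n j i * sz n i i + gz n j (i+1) * sz n (i+1) i := by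
  rcases eq_or_ne i j with rfl | hne
  · rfl
  · obtain ⟨a, rfl⟩ : ∃ a : ℕ, i = (a:ℤ) := ⟨i.toNat, (Int.toNat_of_nonneg hi0).symm⟩
    obtain ⟨b, rfl⟩ : ∃ b : ℕ, j = (b:ℤ) := ⟨j.toNat, (Int.toNat_of_nonneg hj0).symm⟩
    have han : a ≤ n := by exact_mod_cast hin
    have hbn : b ≤ n := by exact_mod_cast hjn
    have hab : a ≠ b := fun h => hne (by exact_mod_cast h)
    obtain ⟨p, hp⟩ : ∃ p, a + b = p + 1 := ⟨a + b - 1, by omega⟩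
    obtain ⟨q, hq⟩ : ∃ q, 2*n = a + b + q + 1 := ⟨2*n - a - b - 1, by omega⟩
    rw [phi_eval n a b p q han hbn hp hq,
      phi_eval n b a p q hbn han (by omega) (by omega)]
    rw [show n.choose b * n.choose a * p.factorial * q.factorial
        = n.choose a * n.choose b * p.factorial * q.factorial by ring]
    have hpr : (p:ℝ) = (a:ℝ) + (b:ℝ) - 1 := by
      have := congrArg (Nat.cast (R := ℝ)) hp; push_cast at this; linarith
    have hqr : (q:ℝ) = 2*(n:ℝ) - (a:ℝ) - (b:ℝ) - 1 := by
      have := congrArg (Nat.cast (R := ℝ)) hq; push_cast at this; linarith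
    rw [hpr, hqr]
    ring

lemma sum_pick (n : ℕ) (m : ℤ) (V : ℝ) :
    (∑ k ∈ Finset.range (n+1), if (k:ℤ) = m then V else 0)
    = if 0 ≤ m ∧ m ≤ (n:ℤ) then V else 0 := by
  rcases em (0 ≤ m ∧ m ≤ (n:ℤ)) with hm | hm
  · rw [if_pos hm, Finset.sum_eq_single m.toNat]
    · rw [if_pos (by omega)]
    · intro k _ hkne
      rw [if_neg (by omega)]
    · intro hmem
      exact absurd (Finset.mem_range.mpr (by omega)) hmem
  · rw [if_neg hm]
    apply Finset.sum_eq_zero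
    intro k hk
    rw [Finset.mem_range] at hk
    rw [if_neg (by omega)]

lemma tridiag_col (n : ℕ) (f : ℤ → ℝ) (j : ℤ) (hj0 : 0 ≤ j) (hjn : j ≤ (n:ℤ)) :
    (∑ k ∈ Finset.range (n+1), f k * sz n k j)
    = f (j-1) * sz n (j-1) j + f j * sz n j j + f (j+1) * sz n (j+1) j := by
  have hsplit : ∀ k : ℤ, f k * sz n k j
      = (if k = j-1 then f (j-1) * sz n (j-1) j else 0)
        + (if k = j then f j * sz n j j else 0)
        + (if k = j+1 then f (j+1) * sz n (j+1) j else 0) := by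
    intro k
    by_cases h1 : k = j - 1
    · subst h1; rw [if_pos rfl, if_neg (by omega), if_neg (by omega)]; ring
    · by_cases h2 : k = j
      · subst h2; rw [if_neg (by omega), if_pos rfl, if_neg (by omega)]; ring
      · by_cases h3 : k = j + 1
        · subst h3; rw [if_neg (by omega), if_neg (by omega), if_pos rfl]; ring
        · rw [if_neg h1, if_neg h2, if_neg h3]
          have : sz n k j = 0 := by
            unfold sz
            rw [if_neg (by omega), if_neg (by omega), if_neg (by omega)]
          rw [this]; ring
  have hsum : (∑ k ∈ Finset.range (n+1), f (k:ℤ) * sz n (k:ℤ) j)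
      = ∑ k ∈ Finset.range (n+1),
          ((if (k:ℤ) = j-1 then f (j-1) * sz n (j-1) j else 0)
          + (if (k:ℤ) = j then f j * sz n j j else 0)
          + (if (k:ℤ) = j+1 then f (j+1) * sz n (j+1) j else 0)) :=
    Finset.sum_congr rfl fun k _ => hsplit k
  rw [hsum, Finset.sum_add_distrib, Finset.sum_add_distrib, sum_pick, sum_pick, sum_pick]
  have e2 : (if 0 ≤ j ∧ j ≤ (n:ℤ) then f j * sz n j j else 0) = f j * sz n j j :=
    if_pos ⟨hj0, hjn⟩
  have e1 : (if 0 ≤ j - 1 ∧ j - 1 ≤ (n:ℤ) then f (j-1) * sz n (j-1) j else 0)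
      = f (j-1) * sz n (j-1) j := by
    rcases em (0 ≤ j - 1) with h1 | h1
    · exact if_pos ⟨h1, by omega⟩
    · have hj : j = 0 := by omega
      have hzl : sz n (j-1) j = 0 := by
        unfold sz
        rw [if_pos (by omega)]
        subst hj
        push_cast
        ring
      rw [if_neg (by omega), hzl, mul_zero]
  have e3 : (if 0 ≤ j + 1 ∧ j + 1 ≤ (n:ℤ) then f (j+1) * sz n (j+1) j else 0)
      = f (j+1) * sz n (j+1) j := by
    rcases em (j + 1 ≤ (n:ℤ)) with h2 | h2
    · exact if_pos ⟨by omega, h2⟩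
    · have hj : j = (n:ℤ) := by omega
      have hzr : sz n (j+1) j = 0 := by
        unfold sz
        rw [if_neg (by omega), if_pos (by omega)]
        subst hj
        push_cast
        ring
      rw [if_neg (by omega), hzr, mul_zero]
  rw [e1, e2, e3]

lemma tridiag_row (n : ℕ) (f : ℤ → ℝ) (i : ℤ) (hi0 : 0 ≤ i) (hin : i ≤ (n:ℤ)) :
    (∑ k ∈ Finset.range (n+1), sz n i k * f k)
    = sz n i (i-1) * f (i-1) + sz n i i * f i + sz n i (i+1) * f (i+1) := by
  have hsplit : ∀ k : ℤ, sz n i k * f k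
      = (if k = i-1 then sz n i (i-1) * f (i-1) else 0)
        + (if k = i then sz n i i * f i else 0)
        + (if k = i+1 then sz n i (i+1) * f (i+1) else 0) := by
    intro k
    by_cases h1 : k = i - 1
    · subst h1; rw [if_pos rfl, if_neg (by omega), if_neg (by omega)]; ring
    · by_cases h2 : k = i
      · subst h2; rw [if_neg (by omega), if_pos rfl, if_neg (by omega)]; ring
      · by_cases h3 : k = i + 1
        · subst h3; rw [if_neg (by omega), if_neg (by omega), if_pos rfl]; ring
        · rw [if_neg h1, if_neg h2, if_neg h3]
          have : sz n i k = 0 := by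
            unfold sz
            rw [if_neg (by omega), if_neg (by omega), if_neg (by omega)]
          rw [this]; ring
  have hsum : (∑ k ∈ Finset.range (n+1), sz n i (k:ℤ) * f (k:ℤ))
      = ∑ k ∈ Finset.range (n+1),
          ((if (k:ℤ) = i-1 then sz n i (i-1) * f (i-1) else 0)
          + (if (k:ℤ) = i then sz n i i * f i else 0)
          + (if (k:ℤ) = i+1 then sz n i (i+1) * f (i+1) else 0)) :=
    Finset.sum_congr rfl fun k _ => hsplit k
  rw [hsum, Finset.sum_add_distrib, Finset.sum_add_distrib, sum_pick, sum_pick, sum_pick]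
  have e2 : (if 0 ≤ i ∧ i ≤ (n:ℤ) then sz n i i * f i else 0) = sz n i i * f i :=
    if_pos ⟨hi0, hin⟩
  have e1 : (if 0 ≤ i - 1 ∧ i - 1 ≤ (n:ℤ) then sz n i (i-1) * f (i-1) else 0)
      = sz n i (i-1) * f (i-1) := by
    rcases em (0 ≤ i - 1) with h1 | h1
    · exact if_pos ⟨h1, by omega⟩
    · have hi : i = 0 := by omega
      have hzl : sz n i (i-1) = 0 := by
        unfold sz
        rw [if_neg (by omega), if_pos rfl]
        subst hi
        push_cast
        ring
      rw [if_neg (by omega), hzl, zero_mul]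
  have e3 : (if 0 ≤ i + 1 ∧ i + 1 ≤ (n:ℤ) then sz n i (i+1) * f (i+1) else 0)
      = sz n i (i+1) * f (i+1) := by
    rcases em (i + 1 ≤ (n:ℤ)) with h2 | h2
    · exact if_pos ⟨by omega, h2⟩
    · have hi : i = (n:ℤ) := by omega
      have hzr : sz n i (i+1) = 0 := by
        unfold sz
        rw [if_pos rfl]
        subst hi
        push_cast
        ring
      rw [if_neg (by omega), hzr, zero_mul]
  rw [e1, e2, e3]

theorem dual_bernstein_recurrence (n : ℕ) (c : ℤ → ℤ → ℝ)
    (hzero : ∀ i j : ℤ, (i < 0 ∨ j < 0 ∨ (n : ℤ) < j) → c i j = 0)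
    (hdual : ∀ i j : ℤ, 0 ≤ i → i ≤ n → 0 ≤ j → j ≤ n →
      ∫ x in (0 : ℝ)..1,
          (∑ q ∈ Finset.range (n + 1), c i q * (bernsteinPolynomial ℝ n q).eval x) *
            (bernsteinPolynomial ℝ n j.toNat).eval x = if i = j then 1 else 0) :
    ∀ i j : ℤ, 0 ≤ i → i ≤ (n : ℤ) - 1 → 0 ≤ j → j ≤ n →
      ((i : ℝ) - n) * ((i : ℝ) + 1) * c (i + 1) j =
        2 * ((i : ℝ) - (j : ℝ)) * ((i : ℝ) + (j : ℝ) - n) * c i j +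
          (j : ℝ) * ((j : ℝ) - n - 1) * c i (j - 1) +
          ((j : ℝ) - n) * ((j : ℝ) + 1) * c i (j + 1) -
          (i : ℝ) * ((i : ℝ) - n - 1) * c (i - 1) j := by
  -- duality in terms of gz
  have hCG : ∀ i j : ℤ, 0 ≤ i → i ≤ (n:ℤ) → 0 ≤ j → j ≤ (n:ℤ) →
      (∑ q ∈ Finset.range (n+1), c i q * gz n q j) = if i = j then 1 else 0 := by
    intro i j hi0 hin hj0 hjn
    have hd := hdual i j hi0 hin hj0 hjn
    have hjtn : j.toNat ≤ n := by omega
    have hfun : ∀ x : ℝ,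
        (∑ q ∈ Finset.range (n + 1), c i q * (bernsteinPolynomial ℝ n q).eval x) *
            (bernsteinPolynomial ℝ n j.toNat).eval x
        = ∑ q ∈ Finset.range (n + 1),
            c i q * ((bernsteinPolynomial ℝ n q).eval x
              * (bernsteinPolynomial ℝ n j.toNat).eval x) := by
      intro x
      rw [Finset.sum_mul]
      exact Finset.sum_congr rfl fun q _ => by ring
    rw [intervalIntegral.integral_congr (fun x _ => hfun x)] at hd
    rw [intervalIntegral.integral_finset_sum (f := fun (q : ℕ) x => c i q * ((bernsteinPolynomial ℝ n q).eval x * (bernsteinPolynomial ℝ n j.toNat).eval x)) (fun q _ =>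
      (continuous_const.mul ((Polynomial.continuous _).mul
        (Polynomial.continuous _))).intervalIntegrable _ _)] at hd
    rw [← hd]
    apply Finset.sum_congr rfl
    intro q hq
    rw [Finset.mem_range] at hq
    rw [intervalIntegral.integral_const_mul, bern_int n q j.toNat (by omega) hjtn]
    have hgz : gz n (q:ℤ) j = (wnat n q j.toNat : ℝ) / ((2*n+1).factorial : ℝ) := by
      unfold gz
      rw [if_pos ⟨Int.natCast_nonneg q, by exact_mod_cast (by omega : q ≤ n), hj0, hjn⟩,
        Int.toNat_natCast]
    rw [hgz]
  -- matrices
  set Cm : Matrix (Fin (n+1)) (Fin (n+1)) ℝ := fun a b => c ((a:ℕ):ℤ) ((b:ℕ):ℤ) with hCm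
  set Gm : Matrix (Fin (n+1)) (Fin (n+1)) ℝ := fun a b => gz n ((a:ℕ):ℤ) ((b:ℕ):ℤ) with hGm
  set Sm : Matrix (Fin (n+1)) (Fin (n+1)) ℝ := fun a b => sz n ((a:ℕ):ℤ) ((b:ℕ):ℤ) with hSm
  have hCGm : Cm * Gm = 1 := by
    ext a b
    rw [Matrix.mul_apply, Matrix.one_apply]
    have hs : ∀ k : Fin (n+1), Cm a k * Gm k b
        = (fun k : ℕ => c ((a:ℕ):ℤ) (k:ℤ) * gz n (k:ℤ) ((b:ℕ):ℤ)) (k:ℕ) := fun k => rfl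
    rw [Finset.sum_congr rfl fun k _ => hs k,
      Fin.sum_univ_eq_sum_range (fun k : ℕ => c ((a:ℕ):ℤ) (k:ℤ) * gz n (k:ℤ) ((b:ℕ):ℤ)) (n+1)]
    rw [hCG ((a:ℕ):ℤ) ((b:ℕ):ℤ) (Int.natCast_nonneg _)
      (by exact_mod_cast Nat.lt_succ_iff.mp a.isLt) (Int.natCast_nonneg _)
      (by exact_mod_cast Nat.lt_succ_iff.mp b.isLt)]
    by_cases hab : a = b
    · rw [if_pos hab, if_pos (by exact_mod_cast congrArg (fun t : Fin (n+1) => ((t:ℕ):ℤ)) hab)]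
    · rw [if_neg hab, if_neg (fun h => hab (by
        apply Fin.ext
        exact_mod_cast h))]
  have hGCm : Gm * Cm = 1 := mul_eq_one_comm.mp hCGm
  have hGSm : Gm * Sm = Sm.transpose * Gm := by
    ext a b
    rw [Matrix.mul_apply, Matrix.mul_apply]
    have ha0 : (0:ℤ) ≤ ((a:ℕ):ℤ) := Int.natCast_nonneg _
    have han : ((a:ℕ):ℤ) ≤ (n:ℤ) := by exact_mod_cast Nat.lt_succ_iff.mp a.isLt
    have hb0 : (0:ℤ) ≤ ((b:ℕ):ℤ) := Int.natCast_nonneg _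
    have hbn : ((b:ℕ):ℤ) ≤ (n:ℤ) := by exact_mod_cast Nat.lt_succ_iff.mp b.isLt
    have hs1 : ∀ k : Fin (n+1), Gm a k * Sm k b
        = (fun k : ℕ => gz n ((a:ℕ):ℤ) (k:ℤ) * sz n (k:ℤ) ((b:ℕ):ℤ)) (k:ℕ) := fun k => rfl
    have hs2 : ∀ k : Fin (n+1), Sm.transpose a k * Gm k b
        = (fun k : ℕ => gz n ((b:ℕ):ℤ) (k:ℤ) * sz n (k:ℤ) ((a:ℕ):ℤ)) (k:ℕ) := by
      intro k
      show sz n ((k:ℕ):ℤ) ((a:ℕ):ℤ) * gz n ((k:ℕ):ℤ) ((b:ℕ):ℤ) = _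
      rw [gz_symm, mul_comm]
    rw [Finset.sum_congr rfl fun k _ => hs1 k,
      Fin.sum_univ_eq_sum_range (fun k : ℕ => gz n ((a:ℕ):ℤ) (k:ℤ) * sz n (k:ℤ) ((b:ℕ):ℤ)) (n+1),
      Finset.sum_congr rfl fun k _ => hs2 k,
      Fin.sum_univ_eq_sum_range (fun k : ℕ => gz n ((b:ℕ):ℤ) (k:ℤ) * sz n (k:ℤ) ((a:ℕ):ℤ)) (n+1),
      tridiag_col n (fun t => gz n ((a:ℕ):ℤ) t) ((b:ℕ):ℤ) hb0 hbn,
      tridiag_col n (fun t => gz n ((b:ℕ):ℤ) t) ((a:ℕ):ℤ) ha0 han]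
    exact key n ((a:ℕ):ℤ) ((b:ℕ):ℤ) ha0 han hb0 hbn
  have hSCm : Sm * Cm = Cm * Sm.transpose := by
    calc Sm * Cm = (Cm * Gm) * (Sm * Cm) := by rw [hCGm, one_mul]
      _ = Cm * (Gm * Sm) * Cm := by simp only [Matrix.mul_assoc]
      _ = Cm * (Sm.transpose * Gm) * Cm := by rw [hGSm]
      _ = (Cm * Sm.transpose) * (Gm * Cm) := by simp only [Matrix.mul_assoc]
      _ = Cm * Sm.transpose := by rw [hGCm, Matrix.mul_one]
  -- extraction
  intro i j hi0 hin1 hj0 hjn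
  have hn1 : 1 ≤ n := by omega
  set af : Fin (n+1) := ⟨i.toNat, by omega⟩ with haf
  set bf : Fin (n+1) := ⟨j.toNat, by omega⟩ with hbf
  have hai : ((af:ℕ):ℤ) = i := by simp [haf]; omega
  have hbi : ((bf:ℕ):ℤ) = j := by simp [hbf]; omega
  have hent := (Matrix.ext_iff.mpr hSCm) af bf
  rw [Matrix.mul_apply, Matrix.mul_apply] at hent
  have hs1 : ∀ k : Fin (n+1), Sm af k * Cm k bf
      = (fun k : ℕ => sz n i (k:ℤ) * c (k:ℤ) j) (k:ℕ) := by
    intro k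
    show sz n ((af:ℕ):ℤ) ((k:ℕ):ℤ) * c ((k:ℕ):ℤ) ((bf:ℕ):ℤ) = _
    rw [hai, hbi]
  have hs2 : ∀ k : Fin (n+1), Cm af k * Sm.transpose k bf
      = (fun k : ℕ => sz n j (k:ℤ) * c i (k:ℤ)) (k:ℕ) := by
    intro k
    show c ((af:ℕ):ℤ) ((k:ℕ):ℤ) * sz n ((bf:ℕ):ℤ) ((k:ℕ):ℤ) = _
    rw [hai, hbi, mul_comm]
  rw [Finset.sum_congr rfl fun k _ => hs1 k,
    Fin.sum_univ_eq_sum_range (fun k : ℕ => sz n i (k:ℤ) * c (k:ℤ) j) (n+1),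
    Finset.sum_congr rfl fun k _ => hs2 k,
    Fin.sum_univ_eq_sum_range (fun k : ℕ => sz n j (k:ℤ) * c i (k:ℤ)) (n+1),
    tridiag_row n (fun t => c t j) i hi0 (by omega),
    tridiag_row n (fun t => c i t) j hj0 hjn] at hent
  have e1 : sz n i (i-1) = (i:ℝ) * ((i:ℝ) - n - 1) := by
    unfold sz; rw [if_neg (by omega), if_pos rfl]
  have e2 : sz n i i = 2 * (i:ℝ) * ((n:ℝ) - (i:ℝ)) := by
    unfold sz; rw [if_neg (by omega), if_neg (by omega), if_pos rfl]
  have e3 : sz n i (i+1) = ((i:ℝ) - n) * ((i:ℝ) + 1) := by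
    unfold sz; rw [if_pos rfl]
  have e4 : sz n j (j-1) = (j:ℝ) * ((j:ℝ) - n - 1) := by
    unfold sz; rw [if_neg (by omega), if_pos rfl]
  have e5 : sz n j j = 2 * (j:ℝ) * ((n:ℝ) - (j:ℝ)) := by
    unfold sz; rw [if_neg (by omega), if_neg (by omega), if_pos rfl]
  have e6 : sz n j (j+1) = ((j:ℝ) - n) * ((j:ℝ) + 1) := by
    unfold sz; rw [if_pos rfl]
  rw [e1, e2, e3, e4, e5, e6] at hent
  linear_combination hent
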